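/- Let V₂ ⊂ GF(3)^4 be a 2-dimensional subspace such that the corresponding projective line has weight pattern (0,3,1,0), i.e. among its four projective points exactly three are spanned by weight-2 vectors and one by a weight-3 vector. Then there is a unique pair {λ, 2λ} of weight-3 vectors in V₂, and the coset decomposition of V₂ by the subspace {0, λ, 2λ} partitions V₂ into three 3-element sets, within each of which any two distinct elements are at Hamming distance 3. -/

import Mathlib

/-!
The weight-3 vectors of `V₂` are permuted by `v ↦ 2 • v`, which fixes only `0`, so the two of
them form a pair `{λ, 2λ}`. Over `GF(3)` the sets `{v, v + λ, v + 2λ}` are exactly the cosets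
`v + ⟨λ⟩`: they partition `V₂`, have `3` elements each, and are indexed by
`V₂ ⧸ ⟨λ⟩`, of order `3 ^ (2 - 1)`. Two distinct elements of one coset differ by a nonzero
multiple of `λ`, which has the weight of `λ`.
-/

def wt (v : Fin 4 → ZMod 3) : ℕ := (Finset.univ.filter fun i => v i ≠ 0).card

open Pointwise

section Cosets

variable {R M : Type*} [Ring R] [AddCommGroup M] [Module R M]

theorem vadd_coset_subset {W U : Submodule R M} (hU : U ≤ W) {v : M} (hv : v ∈ W) :
    v +ᵥ (U : Set M) ⊆ W := by
  rintro _ ⟨u, hu, rfl⟩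
  exact W.add_mem hv (hU hu)

theorem sUnion_vadd_cosets {W U : Submodule R M} (hU : U ≤ W) :
    ⋃₀ {s : Set M | ∃ v ∈ W, s = v +ᵥ (U : Set M)} = W := by
  apply subset_antisymm
  · rintro x ⟨_, ⟨v, hv, rfl⟩, hx⟩
    exact vadd_coset_subset hU hv hx
  · intro v hv
    exact ⟨_, ⟨v, hv, rfl⟩, 0, U.zero_mem, add_zero v⟩

theorem vadd_coset_eq_of_mem {U : Submodule R M} {v x : M} (hx : x ∈ v +ᵥ (U : Set M)) :
    x +ᵥ (U : Set M) = v +ᵥ (U : Set M) := by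
  rw [mem_leftAddCoset_iff] at hx
  refine (leftAddCoset_eq_iff U.toAddSubgroup).mpr ?_
  simpa using U.neg_mem hx

theorem vadd_coset_inter_eq_empty {U : Submodule R M} {v w : M}
    (h : v +ᵥ (U : Set M) ≠ w +ᵥ (U : Set M)) :
    (v +ᵥ (U : Set M)) ∩ (w +ᵥ (U : Set M)) = ∅ := by
  refine Set.eq_empty_of_forall_notMem fun x ⟨hv, hw⟩ => h ?_
  rw [← vadd_coset_eq_of_mem hv, vadd_coset_eq_of_mem hw]

theorem natCard_vadd_cosets (W U : Submodule R M) :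
    Nat.card {s : Set M | ∃ v ∈ W, s = v +ᵥ (U : Set M)} =
      Nat.card (W ⧸ U.comap W.subtype) := by
  let g : W → Set M := fun v => (v : M) +ᵥ (U : Set M)
  have hrange : {s : Set M | ∃ v ∈ W, s = v +ᵥ (U : Set M)} = Set.range g := by
    ext s
    constructor
    · rintro ⟨v, hv, rfl⟩; exact ⟨⟨v, hv⟩, rfl⟩
    · rintro ⟨v, rfl⟩; exact ⟨v, v.2, rfl⟩
  have hker : ∀ v w : W, g v = g w ↔ (U.comap W.subtype).quotientRel v w := by
    intro v w
    rw [Submodule.quotientRel_def, Submodule.mem_comap]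
    exact (leftAddCoset_eq_iff U.toAddSubgroup).trans (by simp [neg_add_eq_sub, sub_mem_comm_iff])
  rw [hrange, ← Nat.card_congr (Setoid.quotientKerEquivRange g)]
  exact Nat.card_congr (Quotient.congrRight hker)

theorem mem_vadd_span_singleton_iff {v l x : M} :
    x ∈ v +ᵥ ((R ∙ l : Submodule R M) : Set M) ↔ ∃ c : R, v + c • l = x := by
  rw [mem_leftAddCoset_iff, SetLike.mem_coe, Submodule.mem_span_singleton]
  simp only [eq_neg_add_iff_add_eq]

theorem exists_smul_eq_sub_of_mem_vadd_span_singleton {v l ρ σ : M}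
    (hρ : ρ ∈ v +ᵥ ((R ∙ l : Submodule R M) : Set M))
    (hσ : σ ∈ v +ᵥ ((R ∙ l : Submodule R M) : Set M)) (hρσ : ρ ≠ σ) :
    ∃ c : R, c ≠ 0 ∧ ρ - σ = c • l := by
  obtain ⟨a, rfl⟩ := mem_vadd_span_singleton_iff.mp hρ
  obtain ⟨b, rfl⟩ := mem_vadd_span_singleton_iff.mp hσ
  refine ⟨a - b, fun hab => hρσ ?_, by rw [sub_smul]; abel⟩
  rw [sub_eq_zero.mp hab]

variable [IsDomain R] [Module.IsTorsionFree R M]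

theorem natCard_span_singleton {l : M} (hl : l ≠ 0) : Nat.card (R ∙ l) = Nat.card R :=
  Nat.card_congr (LinearEquiv.toSpanNonzeroSingleton R M l hl).toEquiv.symm

theorem natCard_mul_natCard_quotient_span_singleton {W : Submodule R M} {l : M} (hlW : l ∈ W)
    (hl : l ≠ 0) : Nat.card R * Nat.card (W ⧸ (R ∙ l).comap W.subtype) = Nat.card W := by
  have hle : R ∙ l ≤ W := (Submodule.span_singleton_le_iff_mem l W).mpr hlW
  rw [Submodule.card_eq_card_quotient_mul_card ((R ∙ l).comap W.subtype),
    Nat.card_congr (Submodule.comapSubtypeEquivOfLe hle).toEquiv, natCard_span_singleton hl]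

end Cosets

theorem triple_eq_vadd_span_singleton {M : Type*} [AddCommGroup M] [Module (ZMod 3) M]
    (v l : M) :
    ({v, v + l, v + (2 : ZMod 3) • l} : Set M) =
      v +ᵥ ((ZMod 3 ∙ l : Submodule (ZMod 3) M) : Set M) := by
  ext x
  rw [mem_vadd_span_singleton_iff]
  simp only [Set.mem_insert_iff, Set.mem_singleton_iff]
  constructor
  · rintro (rfl | rfl | rfl)
    exacts [⟨0, by simp⟩, ⟨1, by simp⟩, ⟨2, rfl⟩]
  · rintro ⟨c, rfl⟩
    rcases (by decide : ∀ c : ZMod 3, c = 0 ∨ c = 1 ∨ c = 2) c with rfl | rfl | rfl <;> simp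

theorem wt_eq_hammingNorm (v : Fin 4 → ZMod 3) : wt v = hammingNorm v := rfl

theorem wt_smul {c : ZMod 3} (hc : c ≠ 0) (v : Fin 4 → ZMod 3) : wt (c • v) = wt v := by
  simp only [wt_eq_hammingNorm]
  exact hammingNorm_smul (fun _ => IsSMulRegular.of_ne_zero hc) v

theorem stmt17_general (V₂ : Submodule (ZMod 3) (Fin 4 → ZMod 3))
    (hdim : Module.finrank (ZMod 3) V₂ = 2)
    (h3 : Nat.card {v | v ∈ V₂ ∧ wt v = 3} = 2) :
    ∃ lam ∈ V₂, wt lam = 3 ∧ lam ≠ (2 : ZMod 3) • lam ∧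
      {v | v ∈ V₂ ∧ wt v = 3} = ({lam, (2 : ZMod 3) • lam} : Set (Fin 4 → ZMod 3)) ∧
      Nat.card {s : Set (Fin 4 → ZMod 3) |
        ∃ v ∈ V₂, s = {v, v + lam, v + (2 : ZMod 3) • lam}} = 3 ∧
      (∀ s : Set (Fin 4 → ZMod 3),
        (∃ v ∈ V₂, s = {v, v + lam, v + (2 : ZMod 3) • lam}) →
          Nat.card s = 3 ∧ s ⊆ V₂ ∧
          ∀ ρ ∈ s, ∀ σ ∈ s, ρ ≠ σ → wt (ρ - σ) = 3) ∧
      ⋃₀ {s : Set (Fin 4 → ZMod 3) |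
        ∃ v ∈ V₂, s = {v, v + lam, v + (2 : ZMod 3) • lam}} = (V₂ : Set (Fin 4 → ZMod 3)) ∧
      (∀ s t : Set (Fin 4 → ZMod 3),
        (∃ v ∈ V₂, s = {v, v + lam, v + (2 : ZMod 3) • lam}) →
        (∃ v ∈ V₂, t = {v, v + lam, v + (2 : ZMod 3) • lam}) →
        s ≠ t → s ∩ t = ∅) := by
  obtain ⟨lam, hlamV, hlam⟩ : {v | v ∈ V₂ ∧ wt v = 3}.Nonempty :=
    Set.nonempty_of_ncard_ne_zero (by rw [← Nat.card_coe_set_eq, h3]; norm_num)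
  have hlam0 : lam ≠ 0 := by
    rintro rfl
    simp [wt_eq_hammingNorm] at hlam
  have hne : lam ≠ (2 : ZMod 3) • lam := fun h =>
    absurd (smul_left_injective (ZMod 3) hlam0 (by simpa using h)) (by decide : (1 : ZMod 3) ≠ 2)
  have hpair : {v | v ∈ V₂ ∧ wt v = 3} = ({lam, (2 : ZMod 3) • lam} : Set _) := by
    refine (Set.eq_of_subset_of_ncard_le ?_ ?_).symm
    · refine Set.insert_subset ⟨hlamV, hlam⟩ (Set.singleton_subset_iff.mpr ?_)
      exact ⟨V₂.smul_mem _ hlamV, by rw [wt_smul (by decide), hlam]⟩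
    · rw [Set.ncard_pair hne, ← Nat.card_coe_set_eq, h3]
  have hU : (ZMod 3 ∙ lam) ≤ V₂ := (Submodule.span_singleton_le_iff_mem _ _).mpr hlamV
  refine ⟨lam, hlamV, hlam, hne, hpair, ?_⟩
  simp only [triple_eq_vadd_span_singleton]
  refine ⟨?_, fun s ⟨v, hv, hs⟩ => hs ▸ ⟨?_, ?_, ?_⟩, ?_, ?_⟩
  · have hcard := natCard_mul_natCard_quotient_span_singleton hlamV hlam0
    rw [Nat.card_zmod, Module.natCard_eq_pow_finrank (K := ZMod 3) (V := V₂), hdim,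
      Nat.card_zmod] at hcard
    rw [natCard_vadd_cosets]
    omega
  · rw [Set.natCard_vadd_set]
    exact (natCard_span_singleton hlam0).trans (Nat.card_zmod 3)
  · exact vadd_coset_subset hU hv
  · intro ρ hρ σ hσ hρσ
    obtain ⟨c, hc, h⟩ := exists_smul_eq_sub_of_mem_vadd_span_singleton hρ hσ hρσ
    rw [h, wt_smul hc, hlam]
  · exact sUnion_vadd_cosets hU
  · rintro s t ⟨v, -, rfl⟩ ⟨w, -, rfl⟩ hst
    exact vadd_coset_inter_eq_empty hst

/-- Let `V₂ ⊂ GF(3)^4` be a 2-dimensional subspace whose projective line has weight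
pattern `(0,3,1,0)` (i.e. it contains no vectors of weight 1 or 4, six of weight 2 and
two of weight 3).  Then there is a unique pair `{λ, 2λ}` of weight-3 vectors in `V₂`,
and the cosets of `{0, λ, 2λ}` partition `V₂` into three 3-element sets, within each of
which any two distinct elements are at Hamming distance 3. -/
theorem stmt17 (V₂ : Submodule (ZMod 3) (Fin 4 → ZMod 3))
    (hdim : Module.finrank (ZMod 3) V₂ = 2)
    (h1 : Nat.card {v | v ∈ V₂ ∧ wt v = 1} = 0)
    (h2 : Nat.card {v | v ∈ V₂ ∧ wt v = 2} = 6)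
    (h3 : Nat.card {v | v ∈ V₂ ∧ wt v = 3} = 2)
    (h4 : Nat.card {v | v ∈ V₂ ∧ wt v = 4} = 0) :
    ∃ lam ∈ V₂, wt lam = 3 ∧ lam ≠ (2 : ZMod 3) • lam ∧
      {v | v ∈ V₂ ∧ wt v = 3} = ({lam, (2 : ZMod 3) • lam} : Set (Fin 4 → ZMod 3)) ∧
      Nat.card {s : Set (Fin 4 → ZMod 3) |
        ∃ v ∈ V₂, s = {v, v + lam, v + (2 : ZMod 3) • lam}} = 3 ∧
      (∀ s : Set (Fin 4 → ZMod 3),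
        (∃ v ∈ V₂, s = {v, v + lam, v + (2 : ZMod 3) • lam}) →
          Nat.card s = 3 ∧ s ⊆ V₂ ∧
          ∀ ρ ∈ s, ∀ σ ∈ s, ρ ≠ σ → wt (ρ - σ) = 3) ∧
      ⋃₀ {s : Set (Fin 4 → ZMod 3) |
        ∃ v ∈ V₂, s = {v, v + lam, v + (2 : ZMod 3) • lam}} = (V₂ : Set (Fin 4 → ZMod 3)) ∧
      (∀ s t : Set (Fin 4 → ZMod 3),
        (∃ v ∈ V₂, s = {v, v + lam, v + (2 : ZMod 3) • lam}) →
        (∃ v ∈ V₂, t = {v, v + lam, v + (2 : ZMod 3) • lam}) →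
        s ≠ t → s ∩ t = ∅) :=
  stmt17_general V₂ hdim h3
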